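/- Construction of Theorem 1 (single Hamiltonian path case): Let p ≥ 2, q a multiple of p, n ≥ 2, r ≥ 0. Let Q be the quadratic form of a Hamiltonian path on n variables with permutation π, let H(x) = Q(x) + ∑γ_i x_i + θ, and for 0 ≤ α, β < p and 0 ≤ δ < p^r define F_β^{αp^r + δ}(x_0,…,x_{n+r-1}) = H(x_0,…,x_{n-1}) + (q/p)(α x_{π(0)} + β x_{π(n-1)}) + (q/p)·δ·(x_n,…,x_{n+r-1}). With codes C_{αp^r+δ} = [χ(F_0^{αp^r+δ}); …; χ(F_{p-1}^{αp^r+δ})], the collection {C_0,…,C_{p^{1+r}-1}} is a type-II (p^{1+r}, p, p^{n+r} - p^r + 1, p^{n+r})-ZCCS; i.e., (i) for any two codes C_s, C_t, the cross-correlation sum ∑_{β=0}^{p-1} C_{χ(F_β^s), χ(F_β^t)}(τ) = 0 whenever |τ| ≥ p^r, and (ii) for s ≠ t, ∑_{β=0}^{p-1} C_{χ(F_β^s), χ(F_β^t)}(0) = 0. -/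

import Mathlib

/-!
Write `c = q / p` and read every phase `F_β^s(i + τ) - F_β^t(i)` through the base-`p` digits of
`i + τ` and `i`. Every cancellation is a character sum `∑_{d < p} ζ_p^{d e} = 0` with `p ∤ e`,
obtained by splitting the range of summation into orbits along which one digit runs through
`0, …, p - 1` while the phase changes by `c d e`.

At shift `0` and `s ≠ t` the phase difference is the linear form
`c ((α_s - α_t) x_{π(0)} + (δ_s - δ_t) · (x_n, …, x_{n+r-1}))`, one of whose coefficients is not
divisible by `p`. At a shift `σ ≥ p ^ r` the leading `n` digits of `i + σ` and `i` differ. If they differ at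
the path end `π(n - 1)`, the sum over `β` already vanishes. Otherwise let `π(v)` be the last path
vertex where they differ and vary the common digit at `π(v + 1)` of `i` and `i + σ`: since
`x_{π(v+1)}` only meets its path neighbours and the digits at `π(v + 2)` agree, the phase changes
by `c d (y_{π(v)} - x_{π(v)})`, where `x` and `y` are the digit vectors of `i` and `i + σ`.
-/

/-- `ζ_q^e` for an integer exponent `e`. -/
noncomputable def zeta (q : ℕ) (e : ℤ) : ℂ :=
  Complex.exp (2 * Real.pi * Complex.I * (e : ℂ) / (q : ℂ))

/-- the `i`-th base-`p` digit of `I`, for vectors of length `m`,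
under the identification `I = ∑_{i=0}^{m-1} p^{m-1-i} I_i`. -/
def dgt (p m i I : ℕ) : ℕ := I / p ^ (m - 1 - i) % p

/-- Aperiodic cross-correlation of sequences `a, b` of length `N` at integer shift `τ`. -/
noncomputable def accs (N : ℕ) (a b : ℕ → ℂ) (τ : ℤ) : ℂ :=
  if 0 ≤ τ ∧ τ < (N : ℤ) then
    ∑ i ∈ Finset.range (N - τ.toNat), a (i + τ.toNat) * (starRingEnd ℂ) (b i)
  else if -(N : ℤ) < τ ∧ τ < 0 then
    ∑ i ∈ Finset.range (N - (-τ).toNat), a i * (starRingEnd ℂ) (b (i + (-τ).toNat))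
  else 0

/-- The multi-variable function of Theorem 1 (single Hamiltonian path plus `r` isolated
vertices), evaluated at the integer `I ∈ [0, p^{n+r})` identified with its base-`p`
digit vector: `F_β^{αp^r+δ}(x) = (q/p)∑_{i=1}^{n-1} x_{π(i-1)}x_{π(i)} + ∑ γ_i x_i + θ
+ (q/p)(α x_{π(0)} + β x_{π(n-1)}) + (q/p)·δ·(x_n,…,x_{n+r-1})`. -/
def Fval (p q n r : ℕ) (hn : 2 ≤ n) (π : Equiv.Perm (Fin n)) (γ : Fin n → ℕ) (θ : ℕ)
    (α β δ I : ℕ) : ℤ :=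
  ((q / p : ℕ) : ℤ) *
    (∑ i : Fin n, if h : 1 ≤ (i : ℕ) then
        (dgt p (n + r) (π ⟨(i : ℕ) - 1, by omega⟩) I : ℤ) * (dgt p (n + r) (π i) I : ℤ)
      else 0)
  + ∑ i : Fin n, (γ i : ℤ) * (dgt p (n + r) i I : ℤ) + (θ : ℤ)
  + ((q / p : ℕ) : ℤ) *
      ((α : ℤ) * (dgt p (n + r) (π ⟨0, by omega⟩) I : ℤ) +
       (β : ℤ) * (dgt p (n + r) (π ⟨n - 1, by omega⟩) I : ℤ))
  + ((q / p : ℕ) : ℤ) *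
      ∑ j ∈ Finset.range r, (dgt p r j δ : ℤ) * (dgt p (n + r) (n + j) I : ℤ)

lemma zeta_add (q : ℕ) (a b : ℤ) : zeta q (a + b) = zeta q a * zeta q b := by
  rw [zeta, zeta, zeta, ← Complex.exp_add]
  congr 1
  push_cast
  ring

lemma conj_zeta (q : ℕ) (a : ℤ) : starRingEnd ℂ (zeta q a) = zeta q (-a) := by
  rw [zeta, zeta, ← Complex.exp_conj]
  congr 1
  simp only [map_div₀, map_mul, Complex.conj_I, map_ofNat, Complex.conj_natCast,
    Complex.conj_ofReal, map_intCast]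
  push_cast
  ring

lemma zeta_mul_div (p q : ℕ) (hp : 0 < p) (hq : 0 < q) (hpq : p ∣ q) (a : ℤ) :
    zeta q ((q / p : ℕ) * a) = zeta p a := by
  obtain ⟨c, rfl⟩ := hpq
  have hc : (c : ℂ) ≠ 0 := by exact_mod_cast (Nat.pos_of_mul_pos_left hq).ne'
  have hp' : (p : ℂ) ≠ 0 := by exact_mod_cast hp.ne'
  rw [zeta, zeta, Nat.mul_div_cancel_left _ hp]
  congr 1
  push_cast
  field_simp

lemma zeta_eq_zpow (p : ℕ) (a : ℤ) :
    zeta p a = Complex.exp (2 * Real.pi * Complex.I / p) ^ a := by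
  rw [zeta, ← Complex.exp_int_mul]
  congr 1
  ring

lemma sum_range_zeta_mul_eq_zero {p : ℕ} (hp : 0 < p) {c : ℤ} (hc : ¬ (p : ℤ) ∣ c) :
    ∑ d ∈ Finset.range p, zeta p (d * c) = 0 := by
  have hprim := Complex.isPrimitiveRoot_exp p hp.ne'
  set ω := Complex.exp (2 * Real.pi * Complex.I / p) ^ c
  have hω : ω ≠ 1 := fun h => hc ((hprim.zpow_eq_one_iff_dvd c).mp h)
  have hωp : ω ^ p = 1 := by
    rw [← zpow_natCast, ← zpow_mul, mul_comm c, zpow_mul, zpow_natCast, hprim.pow_eq_one, one_zpow]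
  have hterm : ∀ d : ℕ, zeta p (d * c) = ω ^ d := fun d => by
    rw [zeta_eq_zpow, mul_comm (d : ℤ) c, zpow_mul, zpow_natCast]
  simp only [hterm]
  rw [geom_sum_eq hω, hωp, sub_self, zero_div]

lemma eq_of_digit_eq {p : ℕ} (hp : 0 < p) :
    ∀ {n X Y : ℕ}, X < p ^ n → Y < p ^ n → (∀ w < n, X / p ^ w % p = Y / p ^ w % p) → X = Y
  | 0, X, Y, hX, hY, _ => by simp at hX hY; omega
  | n + 1, X, Y, hX, hY, h => by
    have hdiv : X / p = Y / p := by
      refine eq_of_digit_eq (n := n) hp ?_ ?_ fun w hw => ?_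
      · rwa [Nat.div_lt_iff_lt_mul hp, ← pow_succ]
      · rwa [Nat.div_lt_iff_lt_mul hp, ← pow_succ]
      · simpa only [Nat.div_div_eq_div_mul, ← pow_succ'] using h (w + 1) (by omega)
    have hmod : X % p = Y % p := by simpa using h 0 (by omega)
    rw [← Nat.div_add_mod X p, ← Nat.div_add_mod Y p, hdiv, hmod]

/-- `I` with its base-`p` digit of weight `p ^ w` replaced by `d`. -/
def setDigit (p w I d : ℕ) : ℕ := I % p ^ w + (d + I / p ^ (w + 1) * p) * p ^ w

section setDigit

variable {p w I d : ℕ}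

lemma setDigit_mod : setDigit p w I d % p ^ w = I % p ^ w := by
  rw [setDigit, Nat.add_mul_mod_self_right, Nat.mod_mod]

lemma setDigit_div (hp : 0 < p) : setDigit p w I d / p ^ w = d + I / p ^ (w + 1) * p := by
  rw [setDigit, Nat.add_mul_div_right _ _ (pow_pos hp w),
    Nat.div_eq_of_lt (Nat.mod_lt _ (pow_pos hp w)), zero_add]

lemma digit_setDigit (hp : 0 < p) (hd : d < p) : setDigit p w I d / p ^ w % p = d := by
  rw [setDigit_div hp, Nat.add_mul_mod_self_right, Nat.mod_eq_of_lt hd]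

lemma setDigit_div_pow_succ (hp : 0 < p) (hd : d < p) :
    setDigit p w I d / p ^ (w + 1) = I / p ^ (w + 1) := by
  have hsucc : ∀ X : ℕ, X / p ^ (w + 1) = X / p ^ w / p := fun X => by
    rw [Nat.div_div_eq_div_mul, pow_succ]
  rw [hsucc, setDigit_div hp, Nat.add_mul_div_right _ _ hp, Nat.div_eq_of_lt hd, zero_add]

lemma digit_setDigit_of_ne (hp : 0 < p) (hd : d < p) {w' : ℕ} (hw' : w' ≠ w) :
    setDigit p w I d / p ^ w' % p = I / p ^ w' % p := by
  rcases lt_or_gt_of_ne hw' with hlt | hgt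
  · have hlow : ∀ X : ℕ, X / p ^ w' % p = X % p ^ w / p ^ w' % p := fun X => by
      obtain ⟨e, rfl⟩ := Nat.exists_eq_add_of_lt hlt
      rw [show w' + e + 1 = w' + (e + 1) by ring, pow_add, Nat.mod_mul_right_div_self,
        Nat.mod_mod_of_dvd _ (dvd_pow_self p (Nat.succ_ne_zero e))]
    rw [hlow, hlow I, setDigit_mod]
  · obtain ⟨e, rfl⟩ := Nat.exists_eq_add_of_lt hgt
    rw [show w + e + 1 = w + 1 + e by ring, pow_add, ← Nat.div_div_eq_div_mul,
      setDigit_div_pow_succ hp hd, Nat.div_div_eq_div_mul]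

lemma setDigit_setDigit (hp : 0 < p) (hd : d < p) (d' : ℕ) :
    setDigit p w (setDigit p w I d) d' = setDigit p w I d' := by
  rw [setDigit, setDigit_mod, setDigit_div_pow_succ hp hd, setDigit]

lemma setDigit_digit : setDigit p w I (I / p ^ w % p) = I := by
  rw [setDigit, pow_succ, ← Nat.div_div_eq_div_mul, Nat.mod_add_div', Nat.mod_add_div']

lemma setDigit_add_digit_mul :
    setDigit p w I d + I / p ^ w % p * p ^ w = I + d * p ^ w := by
  have hI := Nat.mod_add_div I (p ^ w)
  have hq := Nat.mod_add_div (I / p ^ w) p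
  rw [Nat.div_div_eq_div_mul, ← pow_succ] at hq
  calc setDigit p w I d + I / p ^ w % p * p ^ w
      = I % p ^ w + p ^ w * (I / p ^ w % p + p * (I / p ^ (w + 1))) + d * p ^ w := by
        rw [setDigit]; ring
    _ = I + d * p ^ w := by rw [hq, hI]

lemma setDigit_add {σ : ℕ} (h : (I + σ) / p ^ w % p = I / p ^ w % p) :
    setDigit p w (I + σ) d = setDigit p w I d + σ := by
  have h1 := setDigit_add_digit_mul (p := p) (w := w) (I := I + σ) (d := d)
  have h2 := setDigit_add_digit_mul (p := p) (w := w) (I := I) (d := d)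
  rw [h] at h1
  omega

lemma setDigit_lt (hp : 0 < p) (hd : d < p) {m : ℕ} (hw : w < m) (hI : I < p ^ m) :
    setDigit p w I d < p ^ m := by
  obtain ⟨e, rfl⟩ := Nat.exists_eq_add_of_lt hw
  have hhigh : I / p ^ (w + 1) < p ^ e := by
    rw [Nat.div_lt_iff_lt_mul (pow_pos hp _), ← pow_add]
    simpa [add_comm, add_assoc, add_left_comm] using hI
  have hlow : I % p ^ w + d * p ^ w < p ^ (w + 1) := by
    have h1 := Nat.mod_lt I (pow_pos hp w)
    have h2 : (d + 1) * p ^ w ≤ p * p ^ w := Nat.mul_le_mul_right _ hd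
    rw [pow_succ']
    linarith
  calc setDigit p w I d = I % p ^ w + d * p ^ w + I / p ^ (w + 1) * p ^ (w + 1) := by
        rw [setDigit, pow_succ]; ring
    _ < p ^ (w + 1) * (I / p ^ (w + 1) + 1) := by linarith
    _ ≤ p ^ (w + 1) * p ^ e := Nat.mul_le_mul_left _ hhigh
    _ = p ^ (w + e + 1) := by ring

end setDigit

lemma natCast_sub_not_dvd {p a b : ℕ} (ha : a < p) (hb : b < p) (hab : a ≠ b) :
    ¬ (p : ℤ) ∣ (a : ℤ) - b := fun h =>
  hab ((Int.natCast_modEq_iff.mp (Int.modEq_iff_dvd.mpr h)).eq_of_lt_of_lt hb ha).symm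

lemma exists_dgt_ne_of_ne {p r δ₁ δ₂ : ℕ} (hp : 0 < p) (hδ₁ : δ₁ < p ^ r) (hδ₂ : δ₂ < p ^ r)
    (hne : δ₁ ≠ δ₂) : ∃ j < r, dgt p r j δ₁ ≠ dgt p r j δ₂ := by
  by_contra! h
  refine hne (eq_of_digit_eq hp hδ₁ hδ₂ fun w hw => ?_)
  simpa [dgt, show r - 1 - (r - 1 - w) = w by omega] using h (r - 1 - w) (by omega)

lemma dgt_setDigit_self {p m k I d : ℕ} (hp : 0 < p) (hd : d < p) :
    dgt p m k (setDigit p (m - 1 - k) I d) = d :=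
  digit_setDigit hp hd

lemma dgt_setDigit_of_ne {p m k K I d : ℕ} (hp : 0 < p) (hd : d < p) (hk : k < m) (hK : K < m)
    (hne : k ≠ K) : dgt p m k (setDigit p (m - 1 - K) I d) = dgt p m k I :=
  digit_setDigit_of_ne hp hd (by omega)

lemma sum_eq_zero_of_setDigit_orbits {p : ℕ} (hp : 0 < p) (S : Finset ℕ) (f : ℕ → ℂ)
    (w : ℕ → ℕ) (c : ℕ → ℤ)
    (hS : ∀ i ∈ S, ∀ d < p, setDigit p (w i) i d ∈ S)
    (hw : ∀ i ∈ S, ∀ d < p, w (setDigit p (w i) i d) = w i)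
    (hf : ∀ i ∈ S, ∀ d < p,
      f (setDigit p (w i) i d) = f (setDigit p (w i) i 0) * zeta p (d * c i))
    (hc : ∀ i ∈ S, ¬ (p : ℤ) ∣ c i) :
    ∑ i ∈ S, f i = 0 := by
  classical
  set base : ℕ → ℕ := fun i => setDigit p (w i) i 0
  rw [← Finset.sum_fiberwise_of_maps_to (g := base) (t := S.image base)
    (fun i hi => Finset.mem_image_of_mem base hi) f]
  refine Finset.sum_eq_zero fun j hj => ?_
  obtain ⟨i, hi, rfl⟩ := Finset.mem_image.mp hj
  have hwj : w (base i) = w i := hw i hi 0 hp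
  have hfiber : S.filter (fun k => base k = base i) =
      (Finset.range p).image (setDigit p (w i) i) := by
    ext k
    simp only [Finset.mem_filter, Finset.mem_image, Finset.mem_range]
    constructor
    · rintro ⟨hk, hki⟩
      have hwk : w i = w k := by rw [← hwj, ← hki]; exact hw k hk 0 hp
      refine ⟨k / p ^ w k % p, Nat.mod_lt _ hp, ?_⟩
      have hbase : setDigit p (w k) k 0 = setDigit p (w i) i 0 := hki
      rw [← setDigit_setDigit hp hp, ← hbase, hwk, setDigit_setDigit hp hp, setDigit_digit]
    · rintro ⟨d, hd, rfl⟩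
      refine ⟨hS i hi d hd, ?_⟩
      change setDigit p (w _) _ 0 = setDigit p (w i) i 0
      rw [hw i hi d hd, setDigit_setDigit hp hd]
  have hinj : Set.InjOn (setDigit p (w i) i) (Finset.range p) := by
    intro d₁ h₁ d₂ h₂ h
    rw [← digit_setDigit (w := w i) (I := i) hp (Finset.mem_range.mp h₁),
      ← digit_setDigit (w := w i) (I := i) hp (Finset.mem_range.mp h₂), h]
  rw [hfiber, Finset.sum_image hinj, Finset.sum_congr rfl fun d hd =>
    hf i hi d (Finset.mem_range.mp hd), ← Finset.mul_sum,
    sum_range_zeta_mul_eq_zero hp (hc i hi), mul_zero]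

def pathQuad {n : ℕ} (π : Equiv.Perm (Fin n)) (x : ℕ → ℤ) : ℤ :=
  ∑ i : Fin n, if h : 1 ≤ (i : ℕ) then x (π ⟨(i : ℕ) - 1, by omega⟩) * x (π i) else 0

/-- `F_β^{αp^r+δ}` as a function of an arbitrary integer vector `x` (with `c = q/p` and `δ j` the
`j`-th digit of `δ`); `Fval` is its value at the digit vector of `I`. -/
def pathFun (n r : ℕ) (hn : 2 ≤ n) (π : Equiv.Perm (Fin n)) (γ : Fin n → ℕ) (θ : ℕ)
    (c α β : ℤ) (δ : ℕ → ℤ) (x : ℕ → ℤ) : ℤ :=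
  c * pathQuad π x + ∑ i : Fin n, (γ i : ℤ) * x i + θ
  + c * (α * x (π ⟨0, by omega⟩) + β * x (π ⟨n - 1, by omega⟩))
  + c * ∑ j ∈ Finset.range r, δ j * x (n + j)

lemma Fval_eq_pathFun (p q n r : ℕ) (hn : 2 ≤ n) (π : Equiv.Perm (Fin n)) (γ : Fin n → ℕ)
    (θ α β δ I : ℕ) :
    Fval p q n r hn π γ θ α β δ I = pathFun n r hn π γ θ (q / p : ℕ) α β
      (fun j => dgt p r j δ) (fun k => dgt p (n + r) k I) := rfl

lemma mul_sub_mul_perturb {x x' y y' : ℕ → ℤ} {K a b : ℕ} (hab : a ≠ b)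
    (ha : a ≠ K → x' a = x a ∧ y' a = y a) (hb : b ≠ K → x' b = x b ∧ y' b = y b)
    (hK : y' K - y K = x' K - x K) :
    (y' a * y' b - y a * y b) - (x' a * x' b - x a * x b) =
      (x' K - x K) * ((if a = K then y b - x b else 0) + (if b = K then y a - x a else 0)) := by
  by_cases haK : a = K
  · subst haK
    obtain ⟨hxb, hyb⟩ := hb (Ne.symm hab)
    rw [if_pos rfl, if_neg (Ne.symm hab), hxb, hyb]
    linear_combination y b * hK
  · obtain ⟨hxa, hya⟩ := ha haK
    rw [if_neg haK, hxa, hya]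
    by_cases hbK : b = K
    · subst hbK
      rw [if_pos rfl]
      linear_combination y a * hK
    · obtain ⟨hxb, hyb⟩ := hb hbK
      rw [if_neg hbK, hxb, hyb]
      ring

lemma pathQuad_perturb {n : ℕ} (π : Equiv.Perm (Fin n)) {v : ℕ} (hv : v + 1 < n)
    {x x' y y' : ℕ → ℤ}
    (hx : ∀ k < n, k ≠ π ⟨v + 1, hv⟩ → x' k = x k) (hy : ∀ k < n, k ≠ π ⟨v + 1, hv⟩ → y' k = y k)
    (hK : y' (π ⟨v + 1, hv⟩) - y (π ⟨v + 1, hv⟩) = x' (π ⟨v + 1, hv⟩) - x (π ⟨v + 1, hv⟩))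
    (hagree : ∀ u : Fin n, v + 1 < u → y (π u) = x (π u)) :
    (pathQuad π y' - pathQuad π y) - (pathQuad π x' - pathQuad π x) =
      (x' (π ⟨v + 1, hv⟩) - x (π ⟨v + 1, hv⟩)) * (y (π ⟨v, by omega⟩) - x (π ⟨v, by omega⟩)) := by
  set K : ℕ := (π ⟨v + 1, hv⟩ : ℕ)
  have hπ : ∀ i j : Fin n, ((π i : ℕ) = π j ↔ i = j) := fun i j => by
    rw [Fin.val_inj, π.apply_eq_iff_eq]
  have hoff : ∀ i : Fin n, (π i : ℕ) ≠ K → x' (π i) = x (π i) ∧ y' (π i) = y (π i) :=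
    fun i h => ⟨hx _ (π i).isLt h, hy _ (π i).isLt h⟩
  have hedge : ∀ i : Fin n,
      ((if h : 1 ≤ (i : ℕ) then y' (π ⟨(i : ℕ) - 1, by omega⟩) * y' (π i) else 0)
        - (if h : 1 ≤ (i : ℕ) then y (π ⟨(i : ℕ) - 1, by omega⟩) * y (π i) else 0))
      - ((if h : 1 ≤ (i : ℕ) then x' (π ⟨(i : ℕ) - 1, by omega⟩) * x' (π i) else 0)
        - (if h : 1 ≤ (i : ℕ) then x (π ⟨(i : ℕ) - 1, by omega⟩) * x (π i) else 0))
      = if ⟨v + 1, hv⟩ = i then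
        (x' K - x K) * (y (π ⟨v, by omega⟩) - x (π ⟨v, by omega⟩)) else 0 := by
    intro i
    split_ifs with h1 hi hi
    · subst hi
      rw [mul_sub_mul_perturb ((hπ _ _).not.mpr (by simp [Fin.ext_iff])) (hoff _) (hoff _) hK,
        if_neg ((hπ _ _).not.mpr (by simp [Fin.ext_iff])), if_pos rfl]
      simp
    · rw [mul_sub_mul_perturb ((hπ _ _).not.mpr (by simp [Fin.ext_iff]; omega)) (hoff _)
        (hoff _) hK, if_neg ((hπ _ _).not.mpr (Ne.symm hi))]
      split_ifs with h2
      · have hi1 : (i : ℕ) - 1 = v + 1 := by simpa [Fin.ext_iff] using (hπ _ _).mp h2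
        rw [hagree i (by omega)]
        ring
      · ring
    · exact absurd h1 (by simp [← hi])
    · simp
  simp only [pathQuad, ← Finset.sum_sub_distrib]
  rw [Finset.sum_congr rfl fun i _ => hedge i, Finset.sum_ite_eq]
  simp

section pathFun

variable {n r : ℕ} {hn : 2 ≤ n} {π : Equiv.Perm (Fin n)} {γ : Fin n → ℕ} {θ : ℕ} {c : ℤ}

lemma pathFun_eq_add_beta (α β : ℤ) (δ : ℕ → ℤ) (x : ℕ → ℤ) :
    pathFun n r hn π γ θ c α β δ x =
      pathFun n r hn π γ θ c α 0 δ x + c * (β * x (π ⟨n - 1, by omega⟩)) := by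
  unfold pathFun
  ring

lemma pathFun_sub_pathFun (α₁ α₂ β : ℤ) (δ₁ δ₂ : ℕ → ℤ) (x : ℕ → ℤ) :
    pathFun n r hn π γ θ c α₁ β δ₁ x - pathFun n r hn π γ θ c α₂ β δ₂ x =
      c * ((α₁ - α₂) * x (π ⟨0, by omega⟩) + ∑ j ∈ Finset.range r, (δ₁ j - δ₂ j) * x (n + j)) := by
  simp only [pathFun, sub_mul, Finset.sum_sub_distrib]
  ring

/-- Only the two path edges at `π (v + 1)` see the perturbation, and the one towards `π (v + 2)`
contributes nothing because `x` and `y` agree there; the linear terms cancel in the difference. -/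
lemma pathFun_perturb (α₁ α₂ β : ℤ) (δ₁ δ₂ : ℕ → ℤ) {v : ℕ} (hv : v + 1 < n)
    {x x' y y' : ℕ → ℤ}
    (hx : ∀ k < n + r, k ≠ π ⟨v + 1, hv⟩ → x' k = x k)
    (hy : ∀ k < n + r, k ≠ π ⟨v + 1, hv⟩ → y' k = y k)
    (hK : y' (π ⟨v + 1, hv⟩) - y (π ⟨v + 1, hv⟩) = x' (π ⟨v + 1, hv⟩) - x (π ⟨v + 1, hv⟩))
    (hagree : ∀ u : Fin n, v + 1 < u → y (π u) = x (π u)) :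
    (pathFun n r hn π γ θ c α₁ β δ₁ y' - pathFun n r hn π γ θ c α₂ β δ₂ x')
      - (pathFun n r hn π γ θ c α₁ β δ₁ y - pathFun n r hn π γ θ c α₂ β δ₂ x) =
      c * (x' (π ⟨v + 1, hv⟩) - x (π ⟨v + 1, hv⟩)) *
        (y (π ⟨v, by omega⟩) - x (π ⟨v, by omega⟩)) := by
  set K : ℕ := (π ⟨v + 1, hv⟩ : ℕ)
  have hquad := pathQuad_perturb π hv (fun k hk => hx k (by omega))
    (fun k hk => hy k (by omega)) hK hagree
  have hΔ : ∀ k < n + r, y' k - y k = x' k - x k := fun k hk => by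
    by_cases hkK : k = K
    · rw [hkK, hK]
    · rw [hx k hk hkK, hy k hk hkK, sub_self, sub_self]
  have hγ : ∑ i : Fin n, (γ i : ℤ) * y' i - ∑ i : Fin n, (γ i : ℤ) * y i
      = ∑ i : Fin n, (γ i : ℤ) * x' i - ∑ i : Fin n, (γ i : ℤ) * x i := by
    simp only [← Finset.sum_sub_distrib, ← mul_sub]
    exact Finset.sum_congr rfl fun i _ => by rw [hΔ i (by omega)]
  have h0K : ((π ⟨0, by omega⟩ : Fin n) : ℕ) ≠ K := by
    rw [Ne, Fin.val_inj, π.apply_eq_iff_eq, Fin.mk.injEq]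
    omega
  have hδ : ∀ z z' : ℕ → ℤ, (∀ k < n + r, k ≠ K → z' k = z k) → ∀ δ : ℕ → ℤ,
      ∑ j ∈ Finset.range r, δ j * z' (n + j) = ∑ j ∈ Finset.range r, δ j * z (n + j) :=
    fun z z' hz δ => Finset.sum_congr rfl fun j hj => by
      rw [hz _ (by simp at hj; omega) (by omega)]
  have hβ := hΔ (π ⟨n - 1, by omega⟩) (by omega)
  unfold pathFun
  rw [hδ x x' hx, hδ y y' hy, hx _ (by omega) h0K, hy _ (by omega) h0K]
  linear_combination c * hquad + hγ + c * β * hβ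

end pathFun

lemma exists_perturb_coeff {p n r k₀ : ℕ} (hk₀ : k₀ < n) {a : ℤ} {b : ℕ → ℤ}
    (h : ¬ (p : ℤ) ∣ a ∨ a = 0 ∧ ∃ j < r, ¬ (p : ℤ) ∣ b j) :
    ∃ K < n + r, ∃ e : ℤ, ¬ (p : ℤ) ∣ e ∧ ∀ x x' : ℕ → ℤ, (∀ k < n + r, k ≠ K → x' k = x k) →
      a * (x' k₀ - x k₀) + ∑ j ∈ Finset.range r, b j * (x' (n + j) - x (n + j)) =
        e * (x' K - x K) := by
  rcases h with ha | ⟨rfl, j₀, hj₀, hb⟩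
  · refine ⟨k₀, by omega, a, ha, fun x x' hx => ?_⟩
    rw [Finset.sum_eq_zero fun j hj => by
      rw [hx _ (by simp at hj; omega) (by omega), sub_self, mul_zero], add_zero]
  · refine ⟨n + j₀, by omega, b j₀, hb, fun x x' hx => ?_⟩
    rw [zero_mul, zero_add, Finset.sum_eq_single j₀ (fun j hj hne => by
      rw [hx _ (by simp at hj; omega) (by omega), sub_self, mul_zero])
      (fun h => absurd (Finset.mem_range.mpr hj₀) h)]

lemma accs_natCast (N : ℕ) (a b : ℕ → ℂ) (σ : ℕ) :
    accs N a b σ = ∑ i ∈ Finset.range (N - σ), a (i + σ) * starRingEnd ℂ (b i) := by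
  rw [accs, Int.toNat_natCast]
  split_ifs with h1 h2
  · rfl
  · omega
  · rw [Nat.sub_eq_zero_of_le (by omega), Finset.sum_range_zero]

lemma accs_neg_natCast (N : ℕ) (a b : ℕ → ℂ) (σ : ℕ) :
    accs N a b (-σ) = starRingEnd ℂ (accs N b a σ) := by
  rcases Nat.eq_zero_or_pos σ with rfl | hσ
  · simp only [Nat.cast_zero, neg_zero]
    rw [← Nat.cast_zero (R := ℤ), accs_natCast, accs_natCast, map_sum]
    simp [mul_comm]
  rw [accs_natCast, accs, neg_neg, Int.toNat_natCast]
  split_ifs with h1 h2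
  · omega
  · simp [map_sum, mul_comm]
  · rw [Nat.sub_eq_zero_of_le (by omega), Finset.sum_range_zero, map_zero]

lemma zeta_mul_conj_zeta (q : ℕ) (a b : ℤ) :
    zeta q a * starRingEnd ℂ (zeta q b) = zeta q (a - b) := by
  rw [conj_zeta, ← zeta_add, sub_eq_add_neg]

section codes

variable {p q n r : ℕ} {hn : 2 ≤ n} {π : Equiv.Perm (Fin n)} {γ : Fin n → ℕ} {θ : ℕ}

lemma sum_accs_zero_eq_zero (hp : 0 < p) (hq : 0 < q) (hpq : p ∣ q) {α₁ α₂ δ₁ δ₂ : ℕ}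
    (hα₁ : α₁ < p) (hα₂ : α₂ < p) (hδ₁ : δ₁ < p ^ r) (hδ₂ : δ₂ < p ^ r)
    (hne : ¬(α₁ = α₂ ∧ δ₁ = δ₂)) :
    ∑ β ∈ Finset.range p,
      accs (p ^ (n + r)) (fun I => zeta q (Fval p q n r hn π γ θ α₁ β δ₁ I))
        (fun I => zeta q (Fval p q n r hn π γ θ α₂ β δ₂ I)) 0 = 0 := by
  have hcoef : ¬ (p : ℤ) ∣ ((α₁ : ℤ) - α₂) ∨ ((α₁ : ℤ) - α₂ = 0 ∧
      ∃ j < r, ¬ (p : ℤ) ∣ ((dgt p r j δ₁ : ℤ) - dgt p r j δ₂)) := by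
    by_cases hα : α₁ = α₂
    · obtain ⟨j, hj, hjne⟩ := exists_dgt_ne_of_ne hp hδ₁ hδ₂ fun hδ => hne ⟨hα, hδ⟩
      exact Or.inr ⟨by rw [hα, sub_self], j, hj,
        natCast_sub_not_dvd (Nat.mod_lt _ hp) (Nat.mod_lt _ hp) hjne⟩
    · exact Or.inl (natCast_sub_not_dvd hα₁ hα₂ hα)
  obtain ⟨K, hK, e, he, hperturb⟩ := exists_perturb_coeff (π ⟨0, by omega⟩).isLt hcoef
  refine Finset.sum_eq_zero fun β _ => ?_
  rw [← Nat.cast_zero, accs_natCast, Nat.sub_zero]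
  simp only [add_zero, zeta_mul_conj_zeta]
  refine sum_eq_zero_of_setDigit_orbits hp _ _ (fun _ => n + r - 1 - K) (fun _ => e)
    (fun i hi d hd => Finset.mem_range.mpr (setDigit_lt hp hd (by omega)
      (Finset.mem_range.mp hi))) (fun _ _ _ _ => rfl) (fun i _ d hd => ?_) (fun _ _ => he)
  have hdiff := hperturb (fun k => dgt p (n + r) k (setDigit p (n + r - 1 - K) i 0))
    (fun k => dgt p (n + r) k (setDigit p (n + r - 1 - K) i d)) fun k hk hkK => by
      simp only [dgt_setDigit_of_ne hp hd hk hK hkK, dgt_setDigit_of_ne hp hp hk hK hkK]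
  simp only [dgt_setDigit_self hp hd, dgt_setDigit_self hp hp] at hdiff
  rw [← zeta_mul_div p q hp hq hpq, ← zeta_add]
  congr 1
  simp only [mul_sub, Finset.sum_sub_distrib] at hdiff
  simp only [Fval_eq_pathFun, pathFun_sub_pathFun]
  linear_combination ((q / p : ℕ) : ℤ) * hdiff

lemma sum_beta_eq_zero_of_dgt_ne (hp : 0 < p) (hq : 0 < q) (hpq : p ∣ q) (α₁ δ₁ α₂ δ₂ : ℕ)
    {I J : ℕ} (h : dgt p (n + r) (π ⟨n - 1, by omega⟩) J ≠ dgt p (n + r) (π ⟨n - 1, by omega⟩) I) :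
    ∑ β ∈ Finset.range p,
      zeta q (Fval p q n r hn π γ θ α₁ β δ₁ J - Fval p q n r hn π γ θ α₂ β δ₂ I) = 0 := by
  have hterm : ∀ β : ℕ, zeta q (Fval p q n r hn π γ θ α₁ β δ₁ J - Fval p q n r hn π γ θ α₂ β δ₂ I)
      = zeta q (Fval p q n r hn π γ θ α₁ 0 δ₁ J - Fval p q n r hn π γ θ α₂ 0 δ₂ I) *
        zeta p (β * ((dgt p (n + r) (π ⟨n - 1, by omega⟩) J : ℤ)
          - dgt p (n + r) (π ⟨n - 1, by omega⟩) I)) := fun β => by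
    rw [← zeta_mul_div p q hp hq hpq, ← zeta_add, Fval_eq_pathFun, Fval_eq_pathFun,
      pathFun_eq_add_beta _ (β : ℤ), pathFun_eq_add_beta _ (β : ℤ), Fval_eq_pathFun,
      Fval_eq_pathFun, Nat.cast_zero]
    ring_nf
  have hc : ¬ (p : ℤ) ∣ ((dgt p (n + r) (π ⟨n - 1, by omega⟩) J : ℤ)
      - dgt p (n + r) (π ⟨n - 1, by omega⟩) I) :=
    natCast_sub_not_dvd (Nat.mod_lt _ hp) (Nat.mod_lt _ hp) h
  rw [Finset.sum_congr rfl fun β _ => hterm β, ← Finset.mul_sum,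
    sum_range_zeta_mul_eq_zero hp hc, mul_zero]

end codes

def pathVertex {n : ℕ} (π : Equiv.Perm (Fin n)) (u : ℕ) : ℕ :=
  if h : u < n then π ⟨u, h⟩ else 0

lemma pathVertex_of_lt {n : ℕ} (π : Equiv.Perm (Fin n)) {u : ℕ} (h : u < n) :
    pathVertex π u = π ⟨u, h⟩ :=
  dif_pos h

lemma pathVertex_lt {n : ℕ} (π : Equiv.Perm (Fin n)) {u : ℕ} (h : u < n) : pathVertex π u < n := by
  rw [pathVertex_of_lt π h]
  exact (π _).isLt

lemma pathVertex_inj {n : ℕ} (π : Equiv.Perm (Fin n)) {u u' : ℕ} (h : u < n) (h' : u' < n) :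
    pathVertex π u = pathVertex π u' ↔ u = u' := by
  rw [pathVertex_of_lt π h, pathVertex_of_lt π h', Fin.val_inj, π.apply_eq_iff_eq, Fin.mk.injEq]

def DiffersAt {n : ℕ} (p m σ : ℕ) (π : Equiv.Perm (Fin n)) (i u : ℕ) : Prop :=
  u < n ∧ dgt p m (pathVertex π u) (i + σ) ≠ dgt p m (pathVertex π u) i

open Classical in
noncomputable def lastDiff {n : ℕ} (p m σ : ℕ) (π : Equiv.Perm (Fin n)) (i : ℕ) : ℕ :=
  Nat.findGreatest (DiffersAt p m σ π i) (n - 1)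

section shift

variable {p n r σ : ℕ} {π : Equiv.Perm (Fin n)}

/-- The `n` leading digits of `i` are those of `i / p ^ r`, which a shift by `σ ≥ p ^ r` changes. -/
lemma exists_differsAt (hp : 0 < p) (hσ : p ^ r ≤ σ) {i : ℕ} (hi : i + σ < p ^ (n + r)) :
    ∃ u ≤ n - 1, DiffersAt p (n + r) σ π i u := by
  have hlead : (i + σ) / p ^ r ≠ i / p ^ r := by
    have := Nat.div_le_div_right (c := p ^ r) (show i + p ^ r ≤ i + σ by omega)
    rw [Nat.add_div_right _ (pow_pos hp r)] at this
    omega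
  have hbound : ∀ X < p ^ (n + r), X / p ^ r < p ^ n := fun X hX =>
    Nat.div_lt_of_lt_mul (by rwa [← pow_add, add_comm])
  obtain ⟨w, hw, hne⟩ : ∃ w < n, (i + σ) / p ^ r / p ^ w % p ≠ i / p ^ r / p ^ w % p := by
    by_contra! h
    exact hlead (eq_of_digit_eq hp (hbound _ hi) (hbound _ (by omega)) h)
  let k : Fin n := ⟨n - 1 - w, by omega⟩
  refine ⟨(π.symm k : ℕ), by have := (π.symm k).isLt; omega, (π.symm k).isLt, ?_⟩
  rw [pathVertex_of_lt π (π.symm k).isLt, Fin.eta, Equiv.apply_symm_apply]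
  show (i + σ) / p ^ (n + r - 1 - (n - 1 - w)) % p ≠ i / p ^ (n + r - 1 - (n - 1 - w)) % p
  simpa only [dgt, Nat.div_div_eq_div_mul, ← pow_add,
    show n + r - 1 - (n - 1 - w) = r + w by omega] using hne

lemma lastDiff_spec (hp : 0 < p) (hσ : p ^ r ≤ σ) {i : ℕ} (hi : i + σ < p ^ (n + r))
    (hlast : ¬ DiffersAt p (n + r) σ π i (n - 1)) :
    lastDiff p (n + r) σ π i + 1 < n ∧ DiffersAt p (n + r) σ π i (lastDiff p (n + r) σ π i) ∧
      ∀ u, lastDiff p (n + r) σ π i < u → ¬ DiffersAt p (n + r) σ π i u := by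
  classical
  obtain ⟨u, hu, hdiff⟩ := exists_differsAt (π := π) hp hσ hi
  have hspec := Nat.findGreatest_spec hu hdiff
  have hle := Nat.findGreatest_le (P := DiffersAt p (n + r) σ π i) (n - 1)
  unfold lastDiff
  refine ⟨?_, hspec, fun u' hu' hdiff' => ?_⟩
  · by_contra hge
    have heq : Nat.findGreatest (DiffersAt p (n + r) σ π i) (n - 1) = n - 1 := by omega
    exact hlast (heq ▸ hspec)
  · exact Nat.findGreatest_is_greatest hu' (by have := hdiff'.1; omega) hdiff'

lemma setDigit_add_of_not_differsAt {i u : ℕ} (hu : u < n)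
    (h : ¬ DiffersAt p (n + r) σ π i u) (d : ℕ) :
    setDigit p (n + r - 1 - pathVertex π u) (i + σ) d =
      setDigit p (n + r - 1 - pathVertex π u) i d + σ :=
  setDigit_add (by simpa [DiffersAt, hu, dgt] using h)

/-- Rewriting the digit of `i` at a vertex where `i + σ` and `i` agree rewrites the same digit of
`i + σ`, so it does not change where the two differ. -/
lemma differsAt_setDigit (hp : 0 < p) {i u d : ℕ} (hd : d < p) (hu : u < n)
    (h : ¬ DiffersAt p (n + r) σ π i u) :
    DiffersAt p (n + r) σ π (setDigit p (n + r - 1 - pathVertex π u) i d) =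
      DiffersAt p (n + r) σ π i := by
  funext u'
  rw [DiffersAt, DiffersAt, ← setDigit_add_of_not_differsAt hu h]
  refine propext (and_congr_right fun hu' => ?_)
  by_cases heq : u' = u
  · subst heq
    rw [dgt_setDigit_self hp hd, dgt_setDigit_self hp hd]
    simpa [DiffersAt, hu] using h
  · have hne : pathVertex π u' ≠ pathVertex π u := (pathVertex_inj π hu' hu).not.mpr heq
    have hlt : ∀ {u''}, u'' < n → pathVertex π u'' < n + r := fun h => by
      have := pathVertex_lt π h; omega
    rw [dgt_setDigit_of_ne hp hd (hlt hu') (hlt hu) hne,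
      dgt_setDigit_of_ne hp hd (hlt hu') (hlt hu) hne]

variable {q : ℕ} {hn : 2 ≤ n} {γ : Fin n → ℕ} {θ : ℕ}

lemma Fval_shift_setDigit (hp : 0 < p) {v i d : ℕ} (hv : v + 1 < n) (hd : d < p)
    (hnext : ∀ u, v < u → ¬ DiffersAt p (n + r) σ π i u) (α₁ β δ₁ α₂ δ₂ : ℕ) :
    Fval p q n r hn π γ θ α₁ β δ₁ (setDigit p (n + r - 1 - pathVertex π (v + 1)) i d + σ)
      - Fval p q n r hn π γ θ α₂ β δ₂ (setDigit p (n + r - 1 - pathVertex π (v + 1)) i d) =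
    Fval p q n r hn π γ θ α₁ β δ₁ (setDigit p (n + r - 1 - pathVertex π (v + 1)) i 0 + σ)
      - Fval p q n r hn π γ θ α₂ β δ₂ (setDigit p (n + r - 1 - pathVertex π (v + 1)) i 0)
    + (q / p : ℕ) * (d * ((dgt p (n + r) (pathVertex π v) (i + σ) : ℤ)
      - dgt p (n + r) (pathVertex π v) i)) := by
  have hagree := hnext (v + 1) (by omega)
  rw [← setDigit_add_of_not_differsAt hv hagree, ← setDigit_add_of_not_differsAt hv hagree]
  rw [pathVertex_of_lt π hv, pathVertex_of_lt π (by omega : v < n)]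
  set K : ℕ := (π ⟨v + 1, hv⟩ : ℕ) with hKdef
  have hK : K < n + r := by have := (π ⟨v + 1, hv⟩).isLt; omega
  have hπ : ∀ u : Fin n, (π u : ℕ) < n + r := fun u => by have := (π u).isLt; omega
  have hoff : ∀ {X k e}, e < p → k < n + r → k ≠ K →
      (dgt p (n + r) k (setDigit p (n + r - 1 - K) X e) : ℤ) = dgt p (n + r) k X :=
    fun he hk hkK => by rw [dgt_setDigit_of_ne hp he hk hK hkK]
  have hvK : (π ⟨v, by omega⟩ : ℕ) ≠ K := by
    rw [Ne, Fin.val_inj, π.apply_eq_iff_eq, Fin.mk.injEq]; omega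
  have key := pathFun_perturb (r := r) (π := π) (hn := hn) (γ := γ) (θ := θ)
    (c := ((q / p : ℕ) : ℤ)) α₁ α₂ β (fun j => dgt p r j δ₁) (fun j => dgt p r j δ₂) hv
    (x := fun k => dgt p (n + r) k (setDigit p (n + r - 1 - K) i 0))
    (x' := fun k => dgt p (n + r) k (setDigit p (n + r - 1 - K) i d))
    (y := fun k => dgt p (n + r) k (setDigit p (n + r - 1 - K) (i + σ) 0))
    (y' := fun k => dgt p (n + r) k (setDigit p (n + r - 1 - K) (i + σ) d))
    (fun k hk hkK => by simp only [hoff hd hk hkK, hoff hp hk hkK])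
    (fun k hk hkK => by simp only [hoff hd hk hkK, hoff hp hk hkK])
    (by simp only [← hKdef, dgt_setDigit_self hp hd, dgt_setDigit_self hp hp])
    (fun u hu => by
      have hne : (π u : ℕ) ≠ K := by
        rw [Ne, Fin.val_inj, π.apply_eq_iff_eq, Fin.ext_iff]; simp only; omega
      have hu' := hnext u (by omega)
      simp only [DiffersAt, u.isLt, pathVertex_of_lt π u.isLt, true_and, not_not] at hu'
      simp only [hoff hp (hπ u) hne, hu'])
  simp only [← hKdef, hoff hp (hπ _) hvK, dgt_setDigit_self hp hd, dgt_setDigit_self hp hp] at key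
  simp only [Fval_eq_pathFun]
  linear_combination key

lemma lastDiff_setDigit (hp : 0 < p) {i u d : ℕ} (hd : d < p) (hu : u < n)
    (h : ¬ DiffersAt p (n + r) σ π i u) :
    lastDiff p (n + r) σ π (setDigit p (n + r - 1 - pathVertex π u) i d) =
      lastDiff p (n + r) σ π i := by
  unfold lastDiff
  rw [differsAt_setDigit hp hd hu h]

lemma sum_accs_shift_eq_zero (hp : 0 < p) (hq : 0 < q) (hpq : p ∣ q) (hσ : p ^ r ≤ σ)
    (α₁ δ₁ α₂ δ₂ : ℕ) :
    ∑ β ∈ Finset.range p,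
      accs (p ^ (n + r)) (fun I => zeta q (Fval p q n r hn π γ θ α₁ β δ₁ I))
        (fun I => zeta q (Fval p q n r hn π γ θ α₂ β δ₂ I)) σ = 0 := by
  classical
  simp only [accs_natCast, zeta_mul_conj_zeta]
  rw [Finset.sum_comm, ← Finset.sum_filter_add_sum_filter_not _
    (fun i => DiffersAt p (n + r) σ π i (n - 1)), Finset.sum_eq_zero fun i hi => by
      have hdiff := (Finset.mem_filter.mp hi).2.2
      rw [pathVertex_of_lt π (by omega)] at hdiff
      exact sum_beta_eq_zero_of_dgt_ne hp hq hpq α₁ δ₁ α₂ δ₂ hdiff, zero_add]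
  set v := lastDiff p (n + r) σ π
  have hspec : ∀ i ∈ (Finset.range (p ^ (n + r) - σ)).filter
      (fun i => ¬ DiffersAt p (n + r) σ π i (n - 1)),
      i + σ < p ^ (n + r) ∧ v i + 1 < n ∧ DiffersAt p (n + r) σ π i (v i) ∧
        ∀ u, v i < u → ¬ DiffersAt p (n + r) σ π i u := fun i hi => by
    obtain ⟨hi, hlast⟩ := Finset.mem_filter.mp hi
    have hiσ : i + σ < p ^ (n + r) := by rw [Finset.mem_range] at hi; omega
    exact ⟨hiσ, lastDiff_spec hp hσ hiσ hlast⟩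
  refine sum_eq_zero_of_setDigit_orbits hp _ _ (fun i => n + r - 1 - pathVertex π (v i + 1))
    (fun i => (dgt p (n + r) (pathVertex π (v i)) (i + σ) : ℤ)
      - dgt p (n + r) (pathVertex π (v i)) i)
    (fun i hi d hd => ?_) (fun i hi d hd => ?_) (fun i hi d hd => ?_) (fun i hi => ?_)
  all_goals obtain ⟨hiσ, hv, hdiff, hnext⟩ := hspec i hi
  · have hlast := (Finset.mem_filter.mp hi).2
    rw [Finset.mem_filter, Finset.mem_range, differsAt_setDigit hp hd hv (hnext _ (by omega))]
    refine ⟨?_, hlast⟩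
    have := setDigit_lt hp hd (w := n + r - 1 - pathVertex π (v i + 1)) (by omega) hiσ
    rw [setDigit_add_of_not_differsAt hv (hnext _ (by omega))] at this
    omega
  · simp only [v, lastDiff_setDigit hp hd hv (hnext _ (by omega))]
  · rw [Finset.sum_mul]
    refine Finset.sum_congr rfl fun β _ => ?_
    rw [Fval_shift_setDigit hp hv hd hnext, zeta_add, zeta_mul_div p q hp hq hpq]
  · exact natCast_sub_not_dvd (Nat.mod_lt _ hp) (Nat.mod_lt _ hp) hdiff.2

end shift

theorem stmt_10_general (p q n r : ℕ) (hp : 2 ≤ p) (hq : 0 < q) (hpq : p ∣ q) (hn : 2 ≤ n)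
    (π : Equiv.Perm (Fin n)) (γ : Fin n → ℕ) (θ : ℕ) :
    (∀ s < p ^ (1 + r), ∀ t < p ^ (1 + r), ∀ τ : ℤ, (p ^ r : ℤ) ≤ |τ| →
      ∑ β ∈ Finset.range p,
        accs (p ^ (n + r))
          (fun I => zeta q (Fval p q n r hn π γ θ (s / p ^ r) β (s % p ^ r) I))
          (fun I => zeta q (Fval p q n r hn π γ θ (t / p ^ r) β (t % p ^ r) I)) τ = 0) ∧
    (∀ s < p ^ (1 + r), ∀ t < p ^ (1 + r), s ≠ t →
      ∑ β ∈ Finset.range p,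
        accs (p ^ (n + r))
          (fun I => zeta q (Fval p q n r hn π γ θ (s / p ^ r) β (s % p ^ r) I))
          (fun I => zeta q (Fval p q n r hn π γ θ (t / p ^ r) β (t % p ^ r) I)) 0 = 0) := by
  have hp0 : 0 < p := by omega
  refine ⟨fun s _ t _ τ hτ => ?_, fun s hs t ht hst => ?_⟩
  · obtain ⟨σ, rfl | rfl⟩ := Int.eq_nat_or_neg τ
    · exact sum_accs_shift_eq_zero hp0 hq hpq (by exact_mod_cast hτ) _ _ _ _
    · rw [abs_neg] at hτ
      simp only [accs_neg_natCast, ← map_sum,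
        sum_accs_shift_eq_zero hp0 hq hpq (by exact_mod_cast hτ), map_zero]
  · have hlead : ∀ s < p ^ (1 + r), s / p ^ r < p := fun s hs =>
      Nat.div_lt_of_lt_mul (by rwa [← pow_succ, add_comm])
    refine sum_accs_zero_eq_zero hp0 hq hpq (hlead s hs) (hlead t ht)
      (Nat.mod_lt _ (pow_pos hp0 r)) (Nat.mod_lt _ (pow_pos hp0 r)) fun ⟨hdiv, hmod⟩ => hst ?_
    rw [← Nat.div_add_mod s (p ^ r), hdiv, hmod, Nat.div_add_mod]

/-- Theorem 1: with codes `C_{αp^r+δ} = [χ(F_0^{αp^r+δ}); …; χ(F_{p-1}^{αp^r+δ})]`, the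
collection `{C_0,…,C_{p^{1+r}-1}}` is a type-II `(p^{1+r}, p, p^{n+r}-p^r+1, p^{n+r})`-ZCCS:
(i) the cross-correlation sum of any two codes vanishes for all shifts `|τ| ≥ p^r`, and
(ii) the cross-correlation sum of two distinct codes vanishes at shift `0`. -/
theorem stmt_10 (p q n r : ℕ) (hp : 2 ≤ p) (hq : 0 < q) (hpq : p ∣ q) (hn : 2 ≤ n)
    (π : Equiv.Perm (Fin n)) (γ : Fin n → ℕ) (hγ : ∀ i, γ i < p) (θ : ℕ) (hθ : θ < q) :
    (∀ s < p ^ (1 + r), ∀ t < p ^ (1 + r), ∀ τ : ℤ, (p ^ r : ℤ) ≤ |τ| →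
      ∑ β ∈ Finset.range p,
        accs (p ^ (n + r))
          (fun I => zeta q (Fval p q n r hn π γ θ (s / p ^ r) β (s % p ^ r) I))
          (fun I => zeta q (Fval p q n r hn π γ θ (t / p ^ r) β (t % p ^ r) I)) τ = 0) ∧
    (∀ s < p ^ (1 + r), ∀ t < p ^ (1 + r), s ≠ t →
      ∑ β ∈ Finset.range p,
        accs (p ^ (n + r))
          (fun I => zeta q (Fval p q n r hn π γ θ (s / p ^ r) β (s % p ^ r) I))
          (fun I => zeta q (Fval p q n r hn π γ θ (t / p ^ r) β (t % p ^ r) I)) 0 = 0) :=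
  stmt_10_general p q n r hp hq hpq hn π γ θ
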